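/- arXiv:2206.07525 — 4 statements merged into one kernel-verified Lean document; each statement's English description precedes it below -/
import Mathlib

section
/- Let φ: G → H be a graph homomorphism and let A ⊆ E(G) be a φ-stable edge set. For any closed walk P = v_0 v_1 v_2 v_3 v_0 of length 4 in G, the intersection invariant I_A(P) := |Ẽ(P) ∩ A| mod 2 equals 0, and for every vertex u of H, I_{A,u}(P) := |Ẽ(P) ∩ A_u| mod 2 equals 0, where A_u is the set of edges of A with an endpoint in φ^{-1}(u), and Ẽ(P) is the edge multiset of P. -/
namespace Discrete

variable {V : Type*} {W : Type*}

/-- `IsWalk G l` : the nonempty list `l` of vertices forms a walk in `G`. -/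
def IsWalk (G : SimpleGraph V) : List V → Prop
  | [] => False
  | [_] => True
  | a :: b :: l => G.Adj a b ∧ IsWalk G (b :: l)

/-- One elementary homotopy step: substitution, insertion, or deletion. -/
inductive Step (G : SimpleGraph V) : List V → List V → Prop
  | sub (p q : List V) (a b c b' : V) (h1 : G.Adj a b') (h2 : G.Adj b' c) :
      Step G (p ++ a :: b :: c :: q) (p ++ a :: b' :: c :: q)
  | ins (p q : List V) (a w : V) (h : G.Adj a w) :
      Step G (p ++ a :: q) (p ++ a :: w :: a :: q)
  | del (p q : List V) (a w : V) :
      Step G (p ++ a :: w :: a :: q) (p ++ a :: q)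

/-- Two walks are homotopic if one may be transformed into the other via a
finite sequence of substitution, insertion and deletion steps. -/
def Homotopic (G : SimpleGraph V) : List V → List V → Prop :=
  Relation.ReflTransGen (Step G)

/-- The multiset of edges of a walk, counted with multiplicity. -/
def walkEdges (l : List V) : Multiset (Sym2 V) :=
  ↑((l.zip l.tail).map Sym2.mk.uncurry)

/-- A closed walk: a walk whose endpoints coincide. -/
def IsClosedWalk (G : SimpleGraph V) (l : List V) : Prop :=
  IsWalk G l ∧ l.head? = l.getLast?

/-- A closed walk based at `v0`. -/
def IsClosedWalkAt (G : SimpleGraph V) (v0 : V) (l : List V) : Prop :=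
  IsWalk G l ∧ l.head? = some v0 ∧ l.getLast? = some v0

/-- A cycle, recorded as a closed walk `v0 v1 ... v_{k-1} v0` of length at
least 3 whose vertices `v0, ..., v_{k-1}` are distinct. -/
def IsCycleList (G : SimpleGraph V) (l : List V) : Prop :=
  IsClosedWalk G l ∧ l.dropLast.Nodup ∧ 4 ≤ l.length

/-- `G` is simply connected: any two walks with the same endpoints and lengths
of the same parity are homotopic. -/
def SimplyConnected (G : SimpleGraph V) : Prop :=
  G.Connected ∧ ∀ P P' : List V, IsWalk G P → IsWalk G P' →
    P.head? = P'.head? → P.getLast? = P'.getLast? →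
    (P.length - 1) % 2 = (P'.length - 1) % 2 → Homotopic G P P'

/-- Two edges of `H` lie in a common 4-cycle of `H`. -/
def InCommonC4 (H : SimpleGraph W) (e f : Sym2 W) : Prop :=
  ∃ a b c d : W, a ≠ b ∧ a ≠ c ∧ a ≠ d ∧ b ≠ c ∧ b ≠ d ∧ c ≠ d ∧
    H.Adj a b ∧ H.Adj b c ∧ H.Adj c d ∧ H.Adj d a ∧
    (e = s(a, b) ∨ e = s(b, c) ∨ e = s(c, d) ∨ e = s(d, a)) ∧
    (f = s(a, b) ∨ f = s(b, c) ∨ f = s(c, d) ∨ f = s(d, a))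

/-- The equivalence relation on `E(H)` generated by lying in a common `C4`;
`C4Equiv H e f` says `f` lies in the `C4`-closure of `e`. -/
def C4Equiv (H : SimpleGraph W) : Sym2 W → Sym2 W → Prop :=
  Relation.EqvGen (InCommonC4 H)

/-- Two edges share an endpoint. -/
def Touch (e f : Sym2 V) : Prop := ∃ v, v ∈ e ∧ v ∈ f

/-- `[e]_φ`: the edge set of the connected component containing `e` of the
subgraph of `G` induced by the edge set `φ⁻¹(C4-closure of φ(e))`. -/
def PhiClass {G : SimpleGraph V} {H : SimpleGraph W} (φ : G →g H) (e : Sym2 V) :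
    Set (Sym2 V) :=
  {e' | Relation.ReflTransGen (fun a b =>
      a ∈ G.edgeSet ∧ b ∈ G.edgeSet ∧
      C4Equiv H (Sym2.map φ a) (Sym2.map φ e) ∧
      C4Equiv H (Sym2.map φ b) (Sym2.map φ e) ∧ Touch a b) e e'}

/-- `A ⊆ E(G)` is `φ`-stable if it is a union of classes `[e]_φ`. -/
def PhiStable {G : SimpleGraph V} {H : SimpleGraph W} (φ : G →g H)
    (A : Set (Sym2 V)) : Prop :=
  A ⊆ G.edgeSet ∧ ∀ e ∈ A, PhiClass φ e ⊆ A

/-- `A_u`: the edges of `A` having an endpoint in `φ⁻¹(u)`. -/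
def Au {G : SimpleGraph V} {H : SimpleGraph W} (φ : G →g H)
    (A : Set (Sym2 V)) (u : W) : Set (Sym2 V) :=
  {e ∈ A | ∃ v ∈ e, φ v = u}

open Classical in
/-- The intersection invariant `|F ∩ A| mod 2` of a multiset of edges. -/
noncomputable def inv2 (A : Set (Sym2 V)) (F : Multiset (Sym2 V)) : ℕ :=
  (F.filter (· ∈ A)).card % 2

/-- Concatenation of closed walks. -/
def catWalk (l l' : List V) : List V := l ++ l'.tail

/-- `n`-fold concatenation power of a closed walk based at `v0`. -/
def powWalk (v0 : V) (l : List V) : ℕ → List V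
  | 0 => [v0]
  | n + 1 => catWalk l (powWalk v0 l n)

/-- The discrete fundamental group `π₁(G)` is cyclic: some closed walk `P`
based at a vertex `v0` has the property that every closed walk based at `v0`
is homotopic to a power of `P` or of its reverse. -/
def CyclicPi1 (G : SimpleGraph V) : Prop :=
  G.Connected ∧ ∃ (v0 : V) (P : List V), IsClosedWalkAt G v0 P ∧
    ∀ Q : List V, IsClosedWalkAt G v0 Q →
      ∃ n : ℕ, Homotopic G Q (powWalk v0 P n) ∨ Homotopic G Q (powWalk v0 P.reverse n)

/-- `H` contains no cycle of length `n`. -/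
def CFree (H : SimpleGraph V) (n : ℕ) : Prop :=
  ∀ (v : V) (c : H.Walk v v), c.IsCycle → c.length ≠ n

/-
Consecutive edges of a closed 4-walk in `G` share a vertex, so if their images are
`C4`-equivalent they lie in the same class `[e]_φ` and a `φ`-stable set contains both or neither. If `φ` folds the walk
(`φ v0 = φ v2`, or `φ v1 = φ v3` after rotating), the edges pair off with equal images. Otherwise
the image is a genuine 4-cycle of `H`, all four edges are `C4`-equivalent, and the walk meets `A`
in all four edges or none; for `A_u` the edges then pair off according to which of the two
antipodal pairs of the image cycle contains `u`.
-/

theorem inv2_cons_cons_of_iff {B : Set (Sym2 V)} {e f : Sym2 V} (h : e ∈ B ↔ f ∈ B)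
    (F : Multiset (Sym2 V)) : inv2 B (e ::ₘ f ::ₘ F) = inv2 B F := by
  unfold inv2
  by_cases he : e ∈ B
  · simp only [Multiset.filter_cons_of_pos, he, h.mp he, Multiset.card_cons]
    omega
  · simp [Multiset.filter_cons_of_neg, he, mt h.mpr he]

theorem walkEdges_c4 (v0 v1 v2 v3 : V) :
    walkEdges [v0, v1, v2, v3, v0] = ↑[s(v0, v1), s(v1, v2), s(v2, v3), s(v3, v0)] := rfl

theorem inv2_c4_eq_zero_of_iff {B : Set (Sym2 V)} {v0 v1 v2 v3 : V}
    (h012 : s(v0, v1) ∈ B ↔ s(v1, v2) ∈ B) (h230 : s(v2, v3) ∈ B ↔ s(v3, v0) ∈ B) :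
    inv2 B (walkEdges [v0, v1, v2, v3, v0]) = 0 := by
  rw [walkEdges_c4, ← Multiset.cons_coe, ← Multiset.cons_coe, inv2_cons_cons_of_iff h012,
    ← Multiset.cons_coe, ← Multiset.cons_coe, inv2_cons_cons_of_iff h230]
  rfl

theorem walkEdges_c4_rotate (v0 v1 v2 v3 : V) :
    walkEdges [v0, v1, v2, v3, v0] = walkEdges [v1, v2, v3, v0, v1] := by
  rw [walkEdges_c4, walkEdges_c4]
  exact Multiset.coe_eq_coe.mpr (List.rotate_perm _ 1).symm

theorem c4Equiv_of_adj {H : SimpleGraph W} {a b c d : W} (hab : H.Adj a b) (hbc : H.Adj b c)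
    (hcd : H.Adj c d) (hda : H.Adj d a) (hac : a ≠ c) (hbd : b ≠ d) :
    C4Equiv H s(a, b) s(b, c) :=
  .rel _ _ ⟨a, b, c, d, hab.ne, hac, hda.ne', hbc.ne, hbd, hcd.ne, hab, hbc, hcd, hda,
    .inl rfl, .inr (.inl rfl)⟩

theorem Touch.symm {e f : Sym2 V} (h : Touch e f) : Touch f e :=
  let ⟨v, he, hf⟩ := h
  ⟨v, hf, he⟩

namespace PhiStable

variable {G : SimpleGraph V} {H : SimpleGraph W} {φ : G →g H} {A : Set (Sym2 V)}

theorem mem_of_touch (hA : PhiStable φ A) {e f : Sym2 V} (he : e ∈ G.edgeSet)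
    (hf : f ∈ G.edgeSet) (hc : C4Equiv H (Sym2.map φ e) (Sym2.map φ f)) (ht : Touch e f)
    (heA : e ∈ A) : f ∈ A :=
  hA.2 e heA (.single ⟨he, hf, .refl _, .symm _ _ hc, ht⟩)

theorem mem_iff_of_adj (hA : PhiStable φ A) {x y z : V} (hxy : G.Adj x y) (hyz : G.Adj y z)
    (hc : C4Equiv H s(φ x, φ y) s(φ y, φ z)) : s(x, y) ∈ A ↔ s(y, z) ∈ A := by
  have ht : Touch s(x, y) s(y, z) := ⟨y, by simp, by simp⟩
  rw [← Sym2.map_mk, ← Sym2.map_mk] at hc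
  exact ⟨hA.mem_of_touch hxy hyz hc ht, hA.mem_of_touch hyz hxy (.symm _ _ hc) ht.symm⟩

theorem mem_iff_of_map_eq (hA : PhiStable φ A) {x y z : V} (hxy : G.Adj x y) (hyz : G.Adj y z)
    (hxz : φ x = φ z) : s(x, y) ∈ A ↔ s(y, z) ∈ A :=
  hA.mem_iff_of_adj hxy hyz (by rw [hxz, Sym2.eq_swap]; exact .refl _)

end PhiStable

theorem mem_Au_iff {G : SimpleGraph V} {H : SimpleGraph W} {φ : G →g H} {A : Set (Sym2 V)}
    {u : W} {e : Sym2 V} : e ∈ Au φ A u ↔ e ∈ A ∧ u ∈ Sym2.map φ e := by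
  simp [Au, Sym2.mem_map]

theorem mem_Au_iff_of_iff {G : SimpleGraph V} {H : SimpleGraph W} {φ : G →g H}
    {A : Set (Sym2 V)} {u : W} {x y z : V} (h : s(x, y) ∈ A ↔ s(y, z) ∈ A)
    (hu : φ x = u ↔ φ z = u) : s(x, y) ∈ Au φ A u ↔ s(y, z) ∈ Au φ A u := by
  simp only [mem_Au_iff, Sym2.map_mk, Sym2.mem_iff, eq_comm (a := u)]
  tauto

section C4

variable {G : SimpleGraph V} {H : SimpleGraph W} {φ : G →g H} {A : Set (Sym2 V)}
  {v0 v1 v2 v3 : V}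

theorem inv_c4_eq_zero_of_map_eq (hA : PhiStable φ A) (h01 : G.Adj v0 v1) (h12 : G.Adj v1 v2)
    (h23 : G.Adj v2 v3) (h30 : G.Adj v3 v0) (h02 : φ v0 = φ v2) :
    inv2 A (walkEdges [v0, v1, v2, v3, v0]) = 0 ∧
      ∀ u : W, inv2 (Au φ A u) (walkEdges [v0, v1, v2, v3, v0]) = 0 := by
  have h012 := hA.mem_iff_of_map_eq h01 h12 h02
  have h230 := hA.mem_iff_of_map_eq h23 h30 h02.symm
  exact ⟨inv2_c4_eq_zero_of_iff h012 h230, fun u => inv2_c4_eq_zero_of_iff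
    (mem_Au_iff_of_iff h012 (by rw [h02])) (mem_Au_iff_of_iff h230 (by rw [h02]))⟩

theorem inv_c4_eq_zero_of_map_ne (hA : PhiStable φ A) (h01 : G.Adj v0 v1) (h12 : G.Adj v1 v2)
    (h23 : G.Adj v2 v3) (h30 : G.Adj v3 v0) (h02 : φ v0 ≠ φ v2) (h13 : φ v1 ≠ φ v3) :
    inv2 A (walkEdges [v0, v1, v2, v3, v0]) = 0 ∧
      ∀ u : W, inv2 (Au φ A u) (walkEdges [v0, v1, v2, v3, v0]) = 0 := by
  have a01 := φ.map_adj h01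
  have a12 := φ.map_adj h12
  have a23 := φ.map_adj h23
  have a30 := φ.map_adj h30
  have h012 := hA.mem_iff_of_adj h01 h12 (c4Equiv_of_adj a01 a12 a23 a30 h02 h13)
  have h123 := hA.mem_iff_of_adj h12 h23 (c4Equiv_of_adj a12 a23 a30 a01 h13 h02.symm)
  have h230 := hA.mem_iff_of_adj h23 h30 (c4Equiv_of_adj a23 a30 a01 a12 h02.symm h13.symm)
  refine ⟨inv2_c4_eq_zero_of_iff h012 h230, fun u => ?_⟩
  by_cases hu : φ v0 = u ↔ φ v2 = u
  · exact inv2_c4_eq_zero_of_iff (mem_Au_iff_of_iff h012 hu) (mem_Au_iff_of_iff h230 hu.symm)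
  -- `u` is exactly one of `φ v0`, `φ v2`, hence neither of their common neighbours `φ v1`, `φ v3`
  have h1 : φ v1 ≠ u := by rintro rfl; exact hu (iff_of_false a01.ne a12.ne')
  have h3 : φ v3 ≠ u := by rintro rfl; exact hu (iff_of_false a30.ne' a23.ne)
  rw [walkEdges_c4_rotate]
  exact inv2_c4_eq_zero_of_iff (mem_Au_iff_of_iff h123 (iff_of_false h1 h3))
    (mem_Au_iff_of_iff (h012.trans (h123.trans h230)).symm (iff_of_false h3 h1))

end C4

/-- The intersection invariants of a closed walk of length 4 vanish. -/
theorem inv_c4_eq_zero (G : SimpleGraph V) (H : SimpleGraph W) (φ : G →g H)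
    (A : Set (Sym2 V)) (hA : PhiStable φ A)
    (v0 v1 v2 v3 : V) (h01 : G.Adj v0 v1) (h12 : G.Adj v1 v2)
    (h23 : G.Adj v2 v3) (h30 : G.Adj v3 v0) :
    inv2 A (walkEdges [v0, v1, v2, v3, v0]) = 0 ∧
      ∀ u : W, inv2 (Au φ A u) (walkEdges [v0, v1, v2, v3, v0]) = 0 := by
  rcases eq_or_ne (φ v0) (φ v2) with h02 | h02
  · exact inv_c4_eq_zero_of_map_eq hA h01 h12 h23 h30 h02
  rcases eq_or_ne (φ v1) (φ v3) with h13 | h13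
  · simpa only [← walkEdges_c4_rotate] using inv_c4_eq_zero_of_map_eq hA h12 h23 h30 h01 h13
  exact inv_c4_eq_zero_of_map_ne hA h01 h12 h23 h30 h02 h13

end Discrete
end

section
/- Let φ: G → H be a graph homomorphism with G simply connected and let A ⊆ E(G) be φ-stable. If some A-intersection invariant I satisfies I(C) = 1 for some odd cycle C of G, then the graph obtained from G by deleting all edges in A is bipartite. -/
namespace Discrete

variable {V : Type*} {W : Type*}

/-!
For a `φ`-stable `A`, the parity of the number of `A`-edges on a walk is invariant under
homotopy: insertions and deletions traverse an edge twice, and a substitution square is either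
collapsed by `φ` (its edges then pair up within `φ`-classes) or mapped onto a 4-cycle of `H`,
all of whose edges lie in one `C4`-class. The same holds for `A_u`, because on edges of `H`
the indicator of "contains `u`" is the coboundary of the indicator of `u`.

Colour a vertex `v` by the `A`-parity plus the length parity of any walk from a base point of
`C` to `v`. By simple connectivity this does not depend on the walk: two walks of the same
length parity are homotopic, and prefixing the odd cycle `C` to a walk flips both parities.
Crossing an edge outside `A` flips the length parity only, so the colouring is proper.
-/

section Walks

variable {G : SimpleGraph V}

lemma isWalk_iff_isChain {l : List V} : IsWalk G l ↔ l ≠ [] ∧ l.IsChain G.Adj := by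
  fun_induction IsWalk G l <;> simp_all

lemma isWalk_append_iff {p r : List V} {a : V} :
    IsWalk G (p ++ a :: r) ↔ IsWalk G (p ++ [a]) ∧ IsWalk G (a :: r) := by
  rw [isWalk_iff_isChain, isWalk_iff_isChain, isWalk_iff_isChain, List.isChain_split]
  simp

lemma IsWalk.append {l t : List V} {v : V} (hl : IsWalk G l) (hlv : l.getLast? = some v)
    (ht : IsWalk G (v :: t)) : IsWalk G (l ++ t) := by
  obtain ⟨p, rfl⟩ := List.getLast?_eq_some_iff.1 hlv
  simpa using isWalk_append_iff.2 ⟨hl, ht⟩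

lemma isWalk_support {u v : V} (p : G.Walk u v) : IsWalk G p.support :=
  isWalk_iff_isChain.2 ⟨p.support_ne_nil, p.isChain_adj_support⟩

end Walks

lemma walkEdges_cons_cons (x y : V) (l : List V) :
    walkEdges (x :: y :: l) = s(x, y) ::ₘ walkEdges (y :: l) := rfl

lemma walkEdges_append (p : List V) (a : V) (r : List V) :
    walkEdges (p ++ a :: r) = walkEdges (p ++ [a]) + walkEdges (a :: r) := by
  induction p using List.twoStepInduction with
  | nil => simp [walkEdges]
  | singleton x => simp [walkEdges]
  | cons_cons x y p _ ih =>
    simp only [List.cons_append, walkEdges_cons_cons] at ih ⊢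
    rw [ih, Multiset.cons_add]

lemma walkEdges_append_of_getLast? {l : List V} {v : V} (hlv : l.getLast? = some v)
    (t : List V) : walkEdges (l ++ t) = walkEdges l + walkEdges (v :: t) := by
  obtain ⟨p, rfl⟩ := List.getLast?_eq_some_iff.1 hlv
  simpa using walkEdges_append p v t

noncomputable def walkParity (A : Set (Sym2 V)) (l : List V) : ZMod 2 :=
  ((walkEdges l).map (A.indicator 1)).sum

section WalkParity

variable {A : Set (Sym2 V)}

@[simp]
lemma walkParity_singleton (v : V) : walkParity A [v] = 0 := rfl

@[simp]
lemma walkParity_cons_cons (x y : V) (l : List V) :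
    walkParity A (x :: y :: l) = A.indicator 1 s(x, y) + walkParity A (y :: l) := by
  simp [walkParity, walkEdges_cons_cons]

lemma walkParity_append (p : List V) (a : V) (r : List V) :
    walkParity A (p ++ a :: r) = walkParity A (p ++ [a]) + walkParity A (a :: r) := by
  rw [walkParity, walkParity, walkParity, walkEdges_append, Multiset.map_add, Multiset.sum_add]

lemma walkParity_append_of_getLast? {l : List V} {v : V} (hlv : l.getLast? = some v)
    (t : List V) : walkParity A (l ++ t) = walkParity A l + walkParity A (v :: t) := by
  simp [walkParity, walkEdges_append_of_getLast? hlv]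

lemma walkParity_eq_inv2 (l : List V) : walkParity A l = inv2 A (walkEdges l) := by
  classical
  rw [inv2, ZMod.natCast_mod, walkParity]
  induction walkEdges l using Multiset.induction with
  | empty => simp
  | cons e F ih => by_cases he : e ∈ A <;> simp [he, ih, add_comm]

end WalkParity

def IsSquareClosed (G : SimpleGraph V) (A : Set (Sym2 V)) : Prop :=
  ∀ ⦃a b c b' : V⦄, G.Adj a b → G.Adj b c → G.Adj a b' → G.Adj b' c →
    walkParity A [a, b, c] = walkParity A [a, b', c]

section Homotopy

variable {G : SimpleGraph V} {A : Set (Sym2 V)} {P P' : List V}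

lemma Step.isWalk (hs : Step G P P') (hP : IsWalk G P) : IsWalk G P' := by
  cases hs with
  | sub p q a b c b' hab' hb'c =>
    obtain ⟨hp, -, -, hq⟩ := isWalk_append_iff.1 hP
    exact isWalk_append_iff.2 ⟨hp, hab', hb'c, hq⟩
  | ins p q a w haw =>
    obtain ⟨hp, hq⟩ := isWalk_append_iff.1 hP
    exact isWalk_append_iff.2 ⟨hp, haw, haw.symm, hq⟩
  | del p q a w =>
    obtain ⟨hp, -, -, hq⟩ := isWalk_append_iff.1 hP
    exact isWalk_append_iff.2 ⟨hp, hq⟩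

lemma Step.walkParity_eq (hA : IsSquareClosed G A) (hs : Step G P P') (hP : IsWalk G P) :
    walkParity A P' = walkParity A P := by
  cases hs with
  | sub p q a b c b' hab' hb'c =>
    obtain ⟨-, hab, hbc, -⟩ := isWalk_append_iff.1 hP
    have hsplit (x : V) : walkParity A (a :: x :: c :: q) = walkParity A [a, x, c] +
        walkParity A (c :: q) := walkParity_append [a, x] c q
    rw [walkParity_append p a (b' :: c :: q), walkParity_append p a (b :: c :: q), hsplit,
      hsplit, hA hab hbc hab' hb'c]
  | ins p q a w | del p q a w =>
    rw [walkParity_append p a q, walkParity_append p a (w :: a :: q), walkParity_cons_cons,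
      walkParity_cons_cons, Sym2.eq_swap (a := w), ← add_assoc (A.indicator 1 s(a, w)),
      CharTwo.add_self_eq_zero, zero_add]

lemma Homotopic.isWalk (h : Homotopic G P P') (hP : IsWalk G P) : IsWalk G P' := by
  induction h with
  | refl => exact hP
  | tail _ hs ih => exact hs.isWalk ih

lemma Homotopic.walkParity_eq (hA : IsSquareClosed G A) (h : Homotopic G P P')
    (hP : IsWalk G P) : walkParity A P' = walkParity A P := by
  induction h with
  | refl => rfl
  | tail hPQ hs ih => rw [hs.walkParity_eq hA (Homotopic.isWalk hPQ hP), ih]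

end Homotopy

section Coloring

variable {G : SimpleGraph V} {A : Set (Sym2 V)} {C : List V}

lemma walkParity_add_length_eq (hG : SimplyConnected G) (hA : IsSquareClosed G A) {v₀ : V}
    (hC : IsClosedWalkAt G v₀ C) (hCodd : (C.length - 1) % 2 = 1) (hCA : walkParity A C = 1)
    {Q Q' : List V} (hQ : IsWalk G Q) (hQ' : IsWalk G Q') (hQh : Q.head? = some v₀)
    (hQ'h : Q'.head? = some v₀) (hlast : Q.getLast? = Q'.getLast?) :
    walkParity A Q + Q.length = walkParity A Q' + Q'.length := by
  obtain ⟨t, rfl⟩ := List.head?_eq_some_iff.1 hQh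
  obtain ⟨hCw, hCh, hCl⟩ := hC
  by_cases hpar : ((v₀ :: t).length - 1) % 2 = (Q'.length - 1) % 2
  · have hhom := hG.2 _ _ hQ hQ' (hQh.trans hQ'h.symm) hlast hpar
    have hQ'len := List.length_pos_iff.2 (isWalk_iff_isChain.1 hQ').1
    rw [hhom.walkParity_eq hA hQ, (ZMod.natCast_eq_natCast_iff' (v₀ :: t).length Q'.length 2).2
      (by simp at hpar ⊢; omega)]
  · have hRh : (C ++ t).head? = some v₀ := by rw [List.head?_append, hCh]; rfl
    have hRl : (C ++ t).getLast? = (v₀ :: t).getLast? := by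
      obtain ⟨c, rfl⟩ := List.getLast?_eq_some_iff.1 hCl
      simp [List.getLast?_cons]
    have hR := hCw.append hCl hQ
    have hhom := hG.2 _ _ hR hQ' (hRh.trans hQ'h.symm) (hRl.trans hlast)
      (by simp at hpar ⊢; omega)
    have hQ'len := List.length_pos_iff.2 (isWalk_iff_isChain.1 hQ').1
    rw [hhom.walkParity_eq hA hR, walkParity_append_of_getLast? hCl, hCA,
      (ZMod.natCast_eq_natCast_iff' Q'.length ((v₀ :: t).length + 1) 2).2
        (by simp at hpar ⊢; omega)]
    push_cast
    ring_nf
    reduce_mod_char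

theorem colorable_two_deleteEdges (hG : SimplyConnected G) (hA : IsSquareClosed G A)
    (hC : IsClosedWalk G C) (hCodd : (C.length - 1) % 2 = 1) (hCA : walkParity A C = 1) :
    (G.deleteEdges A).Colorable 2 := by
  have hne : C ≠ [] := (isWalk_iff_isChain.1 hC.1).1
  set v₀ := C.head hne
  have hC' : IsClosedWalkAt G v₀ C :=
    ⟨hC.1, List.head?_eq_some_head hne, hC.2 ▸ List.head?_eq_some_head hne⟩
  have hpath (v : V) :
      ∃ P : List V, IsWalk G P ∧ P.head? = some v₀ ∧ P.getLast? = some v := by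
    obtain ⟨p⟩ := hG.1.preconnected v₀ v
    exact ⟨p.support, isWalk_support p, by rw [← p.cons_tail_support]; rfl,
      by rw [List.getLast?_eq_some_getLast p.support_ne_nil, p.getLast_support]⟩
  choose P hP hPh hPl using hpath
  let c (v : V) : ZMod 2 := walkParity A (P v) + (P v).length
  have hc {x y : V} (hxy : (G.deleteEdges A).Adj x y) : c y = c x + 1 := by
    rw [SimpleGraph.deleteEdges_adj] at hxy
    have hxy' : IsWalk G [x, y] := ⟨hxy.1, trivial⟩
    have := walkParity_add_length_eq hG hA hC' hCodd hCA ((hP x).append (hPl x) hxy') (hP y)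
      (by simp [List.head?_append, hPh x]) (hPh y) (by simp [hPl y])
    simp only [walkParity_append_of_getLast? (hPl x), walkParity_cons_cons, walkParity_singleton,
      Set.indicator_of_notMem hxy.2, add_zero, List.length_append, List.length_singleton] at this
    push_cast at this
    rw [← add_assoc] at this
    exact this.symm
  simpa using (SimpleGraph.Coloring.mk c fun hxy hcxy => by simp [hc hxy] at hcxy).colorable

end Coloring

section PhiStable

variable {G : SimpleGraph V} {H : SimpleGraph W} {φ : G →g H} {A : Set (Sym2 V)}

lemma PhiStable.mem_iff_of_touch (hA : PhiStable φ A) {e e' : Sym2 V} (he : e ∈ G.edgeSet)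
    (he' : e' ∈ G.edgeSet) (ht : Touch e e') (hc : C4Equiv H (e.map φ) (e'.map φ)) :
    e ∈ A ↔ e' ∈ A := by
  obtain ⟨v, hve, hve'⟩ := ht
  exact ⟨fun h => hA.2 e h (.single ⟨he, he', .refl _, .symm _ _ hc, v, hve, hve'⟩),
    fun h => hA.2 e' h (.single ⟨he', he, .refl _, hc, v, hve', hve⟩)⟩

/-- A square of `G` on which `φ` is injective is mapped onto a 4-cycle of `H`, so all its edges
are `C4`-equivalent. -/
lemma PhiStable.mem_iff_of_square (hA : PhiStable φ A) {a b c b' : V} (hab : G.Adj a b)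
    (hbc : G.Adj b c) (hab' : G.Adj a b') (hb'c : G.Adj b' c) (hac : φ a ≠ φ c)
    (hbb' : φ b ≠ φ b') :
    (s(a, b) ∈ A ↔ s(b, c) ∈ A) ∧ (s(a, b) ∈ A ↔ s(a, b') ∈ A) ∧
      (s(a, b') ∈ A ↔ s(b', c) ∈ A) := by
  have hC4 {e e' : Sym2 W}
      (he : e = s(φ a, φ b) ∨ e = s(φ b, φ c) ∨ e = s(φ c, φ b') ∨ e = s(φ b', φ a))
      (he' : e' = s(φ a, φ b) ∨ e' = s(φ b, φ c) ∨ e' = s(φ c, φ b') ∨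
        e' = s(φ b', φ a)) :
      C4Equiv H e e' :=
    .rel _ _ ⟨φ a, φ b, φ c, φ b', (φ.map_adj hab).ne, hac, (φ.map_adj hab').ne,
      (φ.map_adj hbc).ne, hbb', (φ.map_adj hb'c).ne.symm, φ.map_adj hab, φ.map_adj hbc,
      (φ.map_adj hb'c).symm, (φ.map_adj hab').symm, he, he'⟩
  refine ⟨hA.mem_iff_of_touch hab hbc ⟨b, by simp, by simp⟩ ?_,
    hA.mem_iff_of_touch hab hab' ⟨a, by simp, by simp⟩ ?_,
    hA.mem_iff_of_touch hab' hb'c ⟨b', by simp, by simp⟩ ?_⟩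
  · simpa using hC4 (by simp) (by simp)
  · simpa using hC4 (by simp) (by simp [Sym2.eq_swap])
  · simpa using hC4 (by simp [Sym2.eq_swap]) (by simp [Sym2.eq_swap])

lemma PhiStable.isSquareClosed_inter_preimage (hA : PhiStable φ A) {B : Set (Sym2 W)}
    (hB : IsSquareClosed H B) : IsSquareClosed G (A ∩ Sym2.map φ ⁻¹' B) := by
  intro a b c b' hab hbc hab' hb'c
  set S := A ∩ Sym2.map φ ⁻¹' B
  have hS {x y x' y' : V} (h : G.Adj x y) (h' : G.Adj x' y') (ht : Touch s(x, y) s(x', y'))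
      (himg : s(φ x, φ y) = s(φ x', φ y')) :
      S.indicator (1 : Sym2 V → ZMod 2) s(x, y) = S.indicator 1 s(x', y') :=
    Set.indicator_eq_indicator (by
      simp [S, hA.mem_iff_of_touch h h' ht (by simpa using himg ▸ .refl _), himg]) rfl
  simp only [walkParity_cons_cons, walkParity_singleton, add_zero]
  by_cases hbb' : φ b = φ b'
  · rw [hS hab hab' ⟨a, by simp, by simp⟩ (by simp [hbb']),
      hS hbc hb'c ⟨c, by simp, by simp⟩ (by simp [hbb'])]
  by_cases hac : φ a = φ c
  · rw [hS hab hbc ⟨b, by simp, by simp⟩ (by rw [hac, Sym2.eq_swap]),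
      hS hab' hb'c ⟨b', by simp, by simp⟩ (by rw [hac, Sym2.eq_swap]),
      CharTwo.add_self_eq_zero, CharTwo.add_self_eq_zero]
  obtain ⟨h1, h2, h3⟩ := hA.mem_iff_of_square hab hbc hab' hb'c hac hbb'
  by_cases hab_mem : s(a, b) ∈ A
  · have hSB {e : Sym2 V} (he : e ∈ A) : S.indicator (1 : Sym2 V → ZMod 2) e =
        B.indicator 1 (e.map φ) := by
      rw [Set.inter_indicator_one, Pi.mul_apply, Set.indicator_of_mem he, Pi.one_apply, one_mul]
      exact Set.indicator_comp_right (g := 1) _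
    rw [hSB hab_mem, hSB (h1.1 hab_mem), hSB (h2.1 hab_mem), hSB (h3.1 (h2.1 hab_mem))]
    simpa using hB (φ.map_adj hab) (φ.map_adj hbc) (φ.map_adj hab') (φ.map_adj hb'c)
  · simp_all [S]

end PhiStable

lemma isSquareClosed_univ (H : SimpleGraph W) : IsSquareClosed H Set.univ := by
  intro _ _ _ _ _ _ _ _
  simp

lemma indicator_setOf_mem_mk {u x y : W} (hxy : x ≠ y) :
    {e : Sym2 W | u ∈ e}.indicator (1 : Sym2 W → ZMod 2) s(x, y) =
      ({u} : Set W).indicator 1 x + ({u} : Set W).indicator 1 y := by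
  classical
  by_cases hx : x = u <;> by_cases hy : y = u <;> simp_all [Set.indicator_apply, eq_comm]

lemma isSquareClosed_setOf_mem (H : SimpleGraph W) (u : W) : IsSquareClosed H {e | u ∈ e} := by
  intro a b c b' hab hbc hab' hb'c
  simp only [walkParity_cons_cons, walkParity_singleton, add_zero, indicator_setOf_mem_mk hab.ne,
    indicator_setOf_mem_mk hbc.ne, indicator_setOf_mem_mk hab'.ne, indicator_setOf_mem_mk hb'c.ne]
  ring_nf
  reduce_mod_char

lemma Au_eq_inter_preimage {G : SimpleGraph V} {H : SimpleGraph W} (φ : G →g H)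
    (A : Set (Sym2 V)) (u : W) : Au φ A u = A ∩ Sym2.map φ ⁻¹' {e | u ∈ e} := by
  ext e
  simp [Au, Sym2.mem_map]

/-- If some `A`-intersection invariant equals 1 on some odd cycle of a simply
connected graph `G`, then `G` minus the edges of `A` is bipartite. -/
theorem deleteEdges_bipartite_of_inv_one (G : SimpleGraph V) (H : SimpleGraph W)
    (φ : G →g H) (hG : SimplyConnected G)
    (A : Set (Sym2 V)) (hA : PhiStable φ A)
    (C : List V) (hC : IsCycleList G C) (hCodd : (C.length - 1) % 2 = 1)
    (hinv : inv2 A (walkEdges C) = 1 ∨ ∃ u : W, inv2 (Au φ A u) (walkEdges C) = 1) :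
    (G.deleteEdges A).Colorable 2 := by
  obtain ⟨B, hB, hCB⟩ : ∃ B : Set (Sym2 W),
      IsSquareClosed H B ∧ walkParity (A ∩ Sym2.map φ ⁻¹' B) C = 1 := by
    rcases hinv with h | ⟨u, h⟩
    · refine ⟨Set.univ, isSquareClosed_univ H, ?_⟩
      rw [Set.preimage_univ, Set.inter_univ, walkParity_eq_inv2, h, Nat.cast_one]
    · refine ⟨{e | u ∈ e}, isSquareClosed_setOf_mem H u, ?_⟩
      rw [← Au_eq_inter_preimage, walkParity_eq_inv2, h, Nat.cast_one]
  exact (colorable_two_deleteEdges hG (hA.isSquareClosed_inter_preimage hB) hC.1 hCodd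
    hCB).mono_left (SimpleGraph.deleteEdges_anti Set.inter_subset_left)

end Discrete
end

section
/- Let H be a graph and C a shortest odd cycle in H. Let X, Y ⊆ E(H) be Eulerian edge sets (every vertex has even degree in the induced subgraph) with |X| ≡ |Y| (mod 2). Writing X_1 = X \ E(C), X_2 = X ∩ E(C), Y_1 = Y \ E(C), Y_2 = Y ∩ E(C), we have |Y| ≤ |X| + 2|Y_1 \ X_1|. -/
/-!
The symmetric difference `(X ∆ Y) ∆ E(C)` is Eulerian, and it has odd size because `|X| ≡ |Y|`
and `|E(C)|` is odd. Peeling off even cycles, an odd Eulerian edge set contains an odd cycle, so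
its size is at least `|E(C)|`. Hence `X ∆ Y` has at most as many edges on `C` as off `C`, and
counting the edges of `X` and `Y` region by region gives the bound.
-/

/-- An edge set is Eulerian if every vertex has even degree in the subgraph it
induces. -/
def EulerianEdges {V : Type*} [DecidableEq V] (H : SimpleGraph V)
    (E : Finset (Sym2 V)) : Prop :=
  ↑E ⊆ H.edgeSet ∧ ∀ v : V, Even (E.filter (fun e => v ∈ e)).card

open Finset SimpleGraph
open scoped symmDiff

namespace Finset

variable {α : Type*} [DecidableEq α]

lemma card_symmDiff_add_two_mul_card_inter (s t : Finset α) :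
    #(s ∆ t) + 2 * #(s ∩ t) = #s + #t := by
  rw [Finset.symmDiff_def, card_union_of_disjoint disjoint_sdiff_sdiff]
  have hs := card_sdiff_add_card_inter s t
  have ht := card_sdiff_add_card_inter t s
  rw [inter_comm] at ht
  omega

lemma filter_symmDiff (p : α → Prop) [DecidablePred p] (s t : Finset α) :
    (s ∆ t).filter p = s.filter p ∆ t.filter p := by
  ext; simp only [mem_filter, mem_symmDiff]; tauto

lemma card_inter_le_card_sdiff_of_card_le_card_symmDiff {s t : Finset α}
    (h : #t ≤ #(s ∆ t)) : #(s ∩ t) ≤ #(s \ t) := by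
  have hs := card_sdiff_add_card_inter t s
  rw [Finset.symmDiff_def, card_union_of_disjoint disjoint_sdiff_sdiff] at h
  rw [inter_comm]
  omega

lemma card_le_card_add_two_mul_card_sdiff_sdiff {X Y C : Finset α}
    (h : #((X ∆ Y) ∩ C) ≤ #((X ∆ Y) \ C)) :
    #Y ≤ #X + 2 * #((Y \ C) \ (X \ C)) := by
  have hoff : (Y \ C) \ (X \ C) = (Y \ X) \ C := by ext; simp only [mem_sdiff]; tauto
  have hdisj : Disjoint (X \ Y) (Y \ X) := disjoint_sdiff_sdiff
  rw [Finset.symmDiff_def, union_inter_distrib_right, union_sdiff_distrib,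
    card_union_of_disjoint (hdisj.mono inter_subset_left inter_subset_left),
    card_union_of_disjoint (hdisj.mono sdiff_subset sdiff_subset)] at h
  have hY := card_sdiff_add_card_inter Y X
  have hX := card_sdiff_add_card_inter X Y
  have hYX := card_sdiff_add_card_inter (Y \ X) C
  have hXY := card_sdiff_add_card_inter (X \ Y) C
  rw [inter_comm] at hX
  rw [hoff]
  omega

end Finset

section Eulerian

variable {V : Type*} [DecidableEq V] {H : SimpleGraph V}

namespace SimpleGraph.Walk

lemma IsTrail.card_edges_toFinset {u v : V} {p : H.Walk u v} (hp : p.IsTrail) :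
    #p.edges.toFinset = p.length := by
  rw [List.toFinset_card_of_nodup hp.edges_nodup, length_edges]

lemma IsTrail.even_card_filter_mem_edges_toFinset_iff {u v : V} {p : H.Walk u v}
    (hp : p.IsTrail) (x : V) :
    Even #(p.edges.toFinset.filter (fun e => x ∈ e)) ↔ (u ≠ v → x ≠ u ∧ x ≠ v) := by
  have hfilter :
      p.edges.toFinset.filter (fun e => x ∈ e) = (p.edges.filter (x ∈ ·)).toFinset := by
    ext; simp
  rw [hfilter, List.toFinset_card_of_nodup (hp.edges_nodup.filter _),
    ← List.countP_eq_length_filter]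
  exact hp.even_countP_edges_iff x

lemma IsTrail.eulerianEdges_edges_toFinset {u : V} {p : H.Walk u u} (hp : p.IsTrail) :
    EulerianEdges H p.edges.toFinset :=
  ⟨fun _ he => p.edges_subset_edgeSet (List.mem_toFinset.1 he),
    fun x => (hp.even_card_filter_mem_edges_toFinset_iff x).2 fun h => absurd rfl h⟩

end SimpleGraph.Walk

namespace EulerianEdges

variable {A B D : Finset (Sym2 V)}

lemma symmDiff (hA : EulerianEdges H A) (hB : EulerianEdges H B) :
    EulerianEdges H (A ∆ B) := by
  refine ⟨?_, fun v => ?_⟩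
  · rw [coe_symmDiff]
    exact symmDiff_le_sup.trans (sup_le hA.1 hB.1)
  · have h := card_symmDiff_add_two_mul_card_inter (A.filter (v ∈ ·)) (B.filter (v ∈ ·))
    have hA := hA.2 v
    have hB := hB.2 v
    rw [filter_symmDiff, Nat.even_iff]
    rw [Nat.even_iff] at hA hB
    omega

lemma exists_adj_notMem_edges (hD : EulerianEdges H D) {a b : V} {p : H.Walk a b}
    (hp : p.IsTrail) (hab : a ≠ b) (hpD : p.edges.toFinset ⊆ D) :
    ∃ x, H.Adj a x ∧ s(a, x) ∈ D ∧ s(a, x) ∉ p.edges := by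
  have hodd : ¬ Even #(p.edges.toFinset.filter (a ∈ ·)) := by
    rw [hp.even_card_filter_mem_edges_toFinset_iff]
    simp [hab]
  have hne : p.edges.toFinset.filter (a ∈ ·) ≠ D.filter (a ∈ ·) :=
    fun h => hodd (h ▸ hD.2 a)
  obtain ⟨f, hfD, hfp⟩ := exists_of_ssubset ((filter_subset_filter _ hpD).ssubset_of_ne hne)
  simp only [mem_filter, List.mem_toFinset, not_and] at hfD hfp
  obtain ⟨hfD, haf⟩ := hfD
  have hf : s(a, Sym2.Mem.other haf) = f := Sym2.other_spec haf
  refine ⟨Sym2.Mem.other haf, ?_, hf.symm ▸ hfD, fun h => hfp (hf ▸ h) haf⟩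
  rw [← mem_edgeSet, hf]
  exact hD.1 hfD

/-- A path in `D` either closes up into a cycle at its start, or extends there; it cannot extend
forever since its edges are distinct edges of `D`. -/
lemma exists_isCycle_of_isPath (hD : EulerianEdges H D) {a b : V} (p : H.Walk a b)
    (hp : p.IsPath) (hab : a ≠ b) (hpD : p.edges.toFinset ⊆ D) :
    ∃ (w : V) (q : H.Walk w w), q.IsCycle ∧ q.edges.toFinset ⊆ D := by
  obtain ⟨x, hax, hxD, hxp⟩ := hD.exists_adj_notMem_edges hp.isTrail hab hpD
  by_cases hx : x ∈ p.support
  · refine ⟨a, .cons hax (p.takeUntil x hx).reverse, ?_, ?_⟩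
    · rw [Walk.cons_isCycle_iff, Walk.edges_reverse, List.mem_reverse]
      exact ⟨(hp.takeUntil hx).reverse, fun h => hxp (p.edges_takeUntil_subset_edges hx h)⟩
    · intro e he
      simp only [List.mem_toFinset, Walk.edges_cons, Walk.edges_reverse, List.mem_cons,
        List.mem_reverse] at he
      rcases he with rfl | he
      · exact hxD
      · exact hpD (List.mem_toFinset.2 (p.edges_takeUntil_subset_edges hx he))
  · have hq : (Walk.cons hax.symm p).IsPath := hp.cons hx
    have hqD : (Walk.cons hax.symm p).edges.toFinset ⊆ D := by
      intro e he
      simp only [List.mem_toFinset, Walk.edges_cons, List.mem_cons] at he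
      rcases he with rfl | he
      · rwa [Sym2.eq_swap]
      · exact hpD (List.mem_toFinset.2 he)
    have hlen : p.length < #D := by
      have := card_le_card hqD
      rw [hq.isTrail.card_edges_toFinset, Walk.length_cons] at this
      omega
    exact hD.exists_isCycle_of_isPath _ hq (fun h => hx (h ▸ p.end_mem_support)) hqD
termination_by #D - p.length
decreasing_by simp only [Walk.length_cons]; omega

lemma exists_isCycle_subset (hD : EulerianEdges H D) (hne : D.Nonempty) :
    ∃ (w : V) (q : H.Walk w w), q.IsCycle ∧ q.edges.toFinset ⊆ D := by
  obtain ⟨e, he⟩ := hne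
  induction e using Sym2.ind with
  | _ a b =>
    have hab : H.Adj a b := hD.1 he
    exact hD.exists_isCycle_of_isPath hab.toWalk (by simp [hab.ne]) hab.ne (by simpa using he)

theorem exists_odd_isCycle_subset (hD : EulerianEdges H D) (hodd : Odd #D) :
    ∃ (w : V) (q : H.Walk w w), q.IsCycle ∧ Odd q.length ∧ q.edges.toFinset ⊆ D := by
  induction D using Finset.strongInduction with
  | H D ih =>
    obtain ⟨w, q, hq, hqD⟩ := hD.exists_isCycle_subset (card_pos.1 hodd.pos)
    by_cases hqodd : Odd q.length
    · exact ⟨w, q, hq, hqodd, hqD⟩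
    set K := q.edges.toFinset
    have hKne : K.Nonempty := by
      rw [← card_pos, hq.isTrail.card_edges_toFinset]
      exact hq.three_le_length.trans_lt' three_pos
    have hcard := card_symmDiff_add_two_mul_card_inter D K
    rw [inter_eq_right.2 hqD, hq.isTrail.card_edges_toFinset] at hcard
    have hodd' : Odd #(D ∆ K) := by
      rw [Nat.odd_iff] at hodd hqodd ⊢
      omega
    have hsub : D ∆ K ⊂ D := symmDiff_of_ge hqD ▸ sdiff_ssubset hqD hKne
    obtain ⟨w', q', hq', hq'odd, hq'D⟩ :=
      ih _ hsub (hD.symmDiff hq.isTrail.eulerianEdges_edges_toFinset) hodd'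
    exact ⟨w', q', hq', hq'odd, hq'D.trans hsub.subset⟩

end EulerianEdges

end Eulerian

/-- If `C` is a shortest odd cycle of `H` and `X, Y` are Eulerian edge sets of
the same parity, then `|Y| ≤ |X| + 2|Y₁ \ X₁|` where `X₁ = X \ E(C)` and
`Y₁ = Y \ E(C)`. -/
theorem eulerian_card_le {V : Type*} [DecidableEq V] (H : SimpleGraph V)
    (v : V) (c : H.Walk v v) (hc : c.IsCycle) (hcodd : Odd c.length)
    (hmin : ∀ (w : V) (d : H.Walk w w), d.IsCycle → Odd d.length →
      c.length ≤ d.length)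
    (X Y : Finset (Sym2 V)) (hX : EulerianEdges H X) (hY : EulerianEdges H Y)
    (hpar : X.card % 2 = Y.card % 2) :
    Y.card ≤ X.card +
      2 * ((Y \ c.edges.toFinset) \ (X \ c.edges.toFinset)).card := by
  set C := c.edges.toFinset
  have hD : EulerianEdges H ((X ∆ Y) ∆ C) :=
    (hX.symmDiff hY).symmDiff hc.isTrail.eulerianEdges_edges_toFinset
  have hDodd : Odd #((X ∆ Y) ∆ C) := by
    have hXY := card_symmDiff_add_two_mul_card_inter X Y
    have hXYC := card_symmDiff_add_two_mul_card_inter (X ∆ Y) C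
    have hC : #C = c.length := hc.isTrail.card_edges_toFinset
    rw [Nat.odd_iff] at hcodd ⊢
    omega
  obtain ⟨w, d, hd, hdodd, hdD⟩ := hD.exists_odd_isCycle_subset hDodd
  have hCle : #C ≤ #((X ∆ Y) ∆ C) := calc
    #C = c.length := hc.isTrail.card_edges_toFinset
    _ ≤ d.length := hmin w d hd hdodd
    _ = #d.edges.toFinset := hd.isTrail.card_edges_toFinset.symm
    _ ≤ #((X ∆ Y) ∆ C) := card_le_card hdD
  exact card_le_card_add_two_mul_card_sdiff_sdiff
    (card_inter_le_card_sdiff_of_card_le_card_symmDiff hCle)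
end

section
/- Fix r ≥ 1. Let H be a graph containing no cycle of length 2r+1, let v be a vertex of H, and let J be a connected nonempty subgraph of H whose vertex set is contained in the set N_s(v) of vertices at distance exactly s from v, for some s ≤ r. Then J has a vertex of degree less than 2r. -/
/-- `H` contains no cycle of length `n`. -/
def CFree {V : Type*} (H : SimpleGraph V) (n : ℕ) : Prop :=
  ∀ (v : V) (c : H.Walk v v), c.IsCycle → c.length ≠ n

/-!
Fix a breadth-first search tree rooted at `v` and call the ancestor at level `1` of a vertex its
branch. Suppose every vertex of `J` has degree at least `2r`, and put `ℓ = 2(r - s) + 1`. A path of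
length `ℓ` in `J` whose endpoints lie in different branches closes up, through the two tree paths
to `v`, into a cycle of length `ℓ + 2s = 2r + 1`. So all such paths have their endpoints in one
branch. In a connected graph of minimum degree `ℓ + 1` this forces the branch to be constant: a
greedily extended path of length `ℓ - 1` ending in the middle vertex of a walk `a b c` shows that
`a` and `c` share a branch, and then so do the ends of every edge, because `ℓ - 1` is even.
Then `J` lies in the sphere of radius `s - 1` around the common ancestor, and we descend until
`s = 0`, where `J` is a single vertex.
-/

namespace SimpleGraph

section PathColouring

variable {W β : Type*} {G : SimpleGraph W} {n ℓ : ℕ} {A : W → β}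

lemma exists_isPath_length_eq_of_le_ncard_neighborSet
    (hdeg : ∀ w, n ≤ (G.neighborSet w).ncard) (S : Finset W) {x : W} (hx : x ∉ S) {k : ℕ}
    (hk : S.card + k ≤ n) :
    ∃ y, ∃ p : G.Walk y x, p.IsPath ∧ p.length = k ∧ ∀ u ∈ p.support, u ∉ S := by
  classical
  induction k with
  | zero => exact ⟨x, .nil, .nil, rfl, by simpa⟩
  | succ k ih =>
    obtain ⟨y, p, hp, hlen, hS⟩ := ih (by omega)
    -- `y` is not its own neighbour, so only `S` and the `k` vertices after `y` are excluded.
    have hcard : ((S ∪ p.support.tail.toFinset : Finset W) : Set W).ncard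
        < (G.neighborSet y).ncard := by
      rw [Set.ncard_coe_finset]
      have := Finset.card_union_le S p.support.tail.toFinset
      have := List.toFinset_card_le p.support.tail
      have := hdeg y
      simp only [List.length_tail, Walk.length_support] at *
      omega
    obtain ⟨u, hu, huS⟩ := Set.exists_mem_notMem_of_ncard_lt_ncard hcard
    simp only [Finset.coe_union, Set.mem_union, Finset.mem_coe, List.mem_toFinset, not_or] at huS
    have hup : u ∉ p.support := by
      rw [← p.cons_tail_support, List.mem_cons, not_or]
      exact ⟨(G.ne_of_adj hu).symm, huS.2⟩
    refine ⟨u, .cons hu.symm p, hp.cons hup, by simp [hlen], ?_⟩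
    simpa [huS.1] using hS

lemma apply_eq_of_adj_of_adj (hdeg : ∀ w, ℓ + 1 ≤ (G.neighborSet w).ncard) (hℓ : 1 ≤ ℓ)
    (hA : ∀ x y (p : G.Walk x y), p.IsPath → p.length = ℓ → A x = A y)
    {a b c : W} (hab : G.Adj a b) (hbc : G.Adj b c) : A a = A c := by
  classical
  obtain ⟨t, T, hT, hlen, hS⟩ := exists_isPath_length_eq_of_le_ncard_neighborSet hdeg {a, c}
    (x := b) (k := ℓ - 1) (by simp [hab.ne', hbc.ne])
    (by have := Finset.card_le_two (a := a) (b := c); omega)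
  have key : ∀ d, G.Adj b d → d ∉ T.support → A t = A d := fun d hbd hd =>
    hA _ _ (T.concat hbd) (hT.concat hd hbd) (by simp [hlen]; omega)
  exact (key a hab.symm fun h => by simpa using hS a h).symm.trans
    (key c hbc fun h => by simpa using hS c h)

lemma apply_eq_of_even_length
    (hstep : ∀ a b c, G.Adj a b → G.Adj b c → A a = A c)
    {x y : W} (p : G.Walk x y) (he : Even p.length) : A x = A y := by
  obtain ⟨m, hm⟩ := he
  have key : ∀ i ≤ m, A x = A (p.getVert (2 * i)) := by
    intro i hi
    induction i with
    | zero => simp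
    | succ i ih =>
      exact (ih (by omega)).trans
        (hstep _ _ _ (p.adj_getVert_succ (by omega)) (p.adj_getVert_succ (by omega)))
  simpa [show 2 * m = p.length by omega] using key m le_rfl

theorem Connected.apply_eq_of_forall_isPath_length_eq (hG : G.Connected) (hℓ : Odd ℓ)
    (hdeg : ∀ w, ℓ + 1 ≤ (G.neighborSet w).ncard)
    (hA : ∀ x y (p : G.Walk x y), p.IsPath → p.length = ℓ → A x = A y) (x y : W) :
    A x = A y := by
  classical
  have hadj : ∀ x y, G.Adj x y → A x = A y := by
    intro x y hxy
    have := hℓ.pos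
    obtain ⟨t, T, hT, hlen, hS⟩ := exists_isPath_length_eq_of_le_ncard_neighborSet hdeg {y}
      (x := x) (k := ℓ - 1) (by simpa using hxy.ne) (by simp; omega)
    have hty : A t = A y :=
      hA _ _ (T.concat hxy) (hT.concat (fun h => by simpa using hS y h) hxy)
        (by simp [hlen]; omega)
    have htx : A t = A x := apply_eq_of_even_length
      (fun _ _ _ => apply_eq_of_adj_of_adj hdeg hℓ.pos hA) T
      (by obtain ⟨m, rfl⟩ := hℓ; simp [hlen])
    exact htx.symm.trans hty
  obtain ⟨p⟩ := hG.preconnected x y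
  induction p with
  | nil => rfl
  | cons h _ ih => exact (hadj _ _ h).trans ih

end PathColouring

variable {V : Type*} {G : SimpleGraph V} {v w : V}

namespace Walk

variable {u x : V}

lemma IsPath.start_notMem_support_tail {p : G.Walk u v} (hp : p.IsPath) : u ∉ p.support.tail := by
  have := hp.support_nodup
  rw [← p.cons_tail_support, List.nodup_cons] at this
  exact this.1

lemma IsPath.append {p : G.Walk u v} {q : G.Walk v w} (hp : p.IsPath) (hq : q.IsPath)
    (h : ∀ x ∈ p.support, x ∈ q.support → x = v) : (p.append q).IsPath := by
  rw [isPath_def, support_append, List.nodup_append]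
  refine ⟨hp.support_nodup, hq.support_nodup.sublist (List.tail_sublist _), ?_⟩
  rintro x hx y hy rfl
  obtain rfl := h x hx (List.mem_of_mem_tail hy)
  exact hq.start_notMem_support_tail hy

lemma IsPath.isCycle_append_of_forall_mem {p : G.Walk u v} {q : G.Walk v u} (hp : p.IsPath)
    (hq : q.IsPath) (h : ∀ x ∈ p.support, x ∈ q.support → x = u ∨ x = v)
    (hn : 1 < p.length ∨ 1 < q.length) : (p.append q).IsCycle := by
  refine hp.isCycle_append hq (fun x hx hx' => ?_) hn
  rcases h x (List.mem_of_mem_tail hx) (List.mem_of_mem_tail hx') with rfl | rfl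
  · exact hp.start_notMem_support_tail hx
  · exact hq.start_notMem_support_tail hx'

end Walk

lemma exists_adj_dist_add_one_eq (h : G.dist v w ≠ 0) :
    ∃ u, G.Adj w u ∧ G.dist v u + 1 = G.dist v w := by
  obtain ⟨p, hp⟩ := exists_walk_of_dist_ne_zero (dist_comm (G := G) ▸ h)
  have hnil : ¬p.Nil := by rw [Walk.not_nil_iff_lt_length, hp, dist_comm]; omega
  refine ⟨p.snd, p.adj_snd hnil, ?_⟩
  have hsnd : G.dist v p.snd + 1 ≤ G.dist v w := by
    have := Walk.length_tail_add_one hnil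
    rw [dist_comm, dist_comm (u := v)]
    have := dist_le p.tail
    omega
  rcases (p.adj_snd hnil).diff_dist_adj (u := v) with h' | h' | h' <;> omega

open Classical in
/-- The parent of `w` in a fixed breadth-first search tree rooted at `v` (`w` itself when
`G.dist v w = 0`). Using one tree, rather than arbitrary geodesics, makes the ancestor chains of
two vertices stay together once they meet. -/
noncomputable def bfsParent (G : SimpleGraph V) (v w : V) : V :=
  if h : G.dist v w ≠ 0 then (exists_adj_dist_add_one_eq h).choose else w

lemma adj_bfsParent (h : G.dist v w ≠ 0) : G.Adj w (G.bfsParent v w) := by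
  rw [bfsParent, dif_pos h]
  exact (exists_adj_dist_add_one_eq h).choose_spec.1

lemma dist_bfsParent_add_one (h : G.dist v w ≠ 0) :
    G.dist v (G.bfsParent v w) + 1 = G.dist v w := by
  rw [bfsParent, dif_pos h]
  exact (exists_adj_dist_add_one_eq h).choose_spec.2

lemma dist_iterate_bfsParent {k : ℕ} (hk : k ≤ G.dist v w) :
    G.dist v ((G.bfsParent v)^[k] w) = G.dist v w - k := by
  induction k with
  | zero => rfl
  | succ k ih =>
    have hk' := ih (by omega)
    have := dist_bfsParent_add_one (G := G) (v := v) (w := (G.bfsParent v)^[k] w) (by omega)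
    rw [Function.iterate_succ_apply']
    omega

lemma exists_isPath_iterate_bfsParent {k : ℕ} (hk : k ≤ G.dist v w) :
    ∃ p : G.Walk w ((G.bfsParent v)^[k] w),
      p.IsPath ∧ p.length = k ∧ ∀ x ∈ p.support, ∃ i ≤ k, (G.bfsParent v)^[i] w = x := by
  induction k generalizing w with
  | zero => exact ⟨.nil, .nil, rfl, by simp⟩
  | succ k ih =>
    have hw : G.dist v w ≠ 0 := by omega
    have hparent := dist_bfsParent_add_one hw
    obtain ⟨p, hp, hlen, hmem⟩ := ih (w := G.bfsParent v w) (by omega)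
    have hwp : w ∉ p.support := fun hw' => by
      obtain ⟨i, hi, hiw⟩ := hmem w hw'
      have := dist_iterate_bfsParent (G := G) (v := v) (w := G.bfsParent v w) (k := i) (by omega)
      rw [hiw] at this
      omega
    refine ⟨.cons (adj_bfsParent hw) p, hp.cons hwp, by simp [hlen], ?_⟩
    show ∀ x ∈ w :: p.support, _
    simp only [List.mem_cons, forall_eq_or_imp]
    refine ⟨⟨0, by omega, rfl⟩, fun x hx => ?_⟩
    obtain ⟨i, hi, rfl⟩ := hmem x hx
    exact ⟨i + 1, by omega, rfl⟩

lemma reachable_iterate_bfsParent {k : ℕ} (hk : k ≤ G.dist v w) :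
    G.Reachable ((G.bfsParent v)^[k] w) w :=
  let ⟨p, _⟩ := exists_isPath_iterate_bfsParent hk
  p.reachable.symm

lemma iterate_dist_bfsParent (h : G.Reachable v w) : (G.bfsParent v)^[G.dist v w] w = v := by
  have hr := h.trans (reachable_iterate_bfsParent (G := G) (v := v) (w := w) le_rfl).symm
  have := dist_iterate_bfsParent (G := G) (v := v) (w := w) le_rfl
  rw [Nat.sub_self, hr.dist_eq_zero_iff] at this
  exact this.symm

lemma dist_iterate_bfsParent_left {k : ℕ} (hk : k < G.dist v w) :
    G.dist ((G.bfsParent v)^[k] w) w = k := by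
  obtain ⟨p, -, hlen, -⟩ := exists_isPath_iterate_bfsParent (G := G) (v := v) hk.le
  have hup : G.dist ((G.bfsParent v)^[k] w) w ≤ k := by
    simpa [hlen] using dist_le p.reverse
  have hr : G.Reachable v ((G.bfsParent v)^[k] w) :=
    Reachable.of_dist_ne_zero (by rw [dist_iterate_bfsParent hk.le]; omega)
  have := hr.dist_triangle_left w
  rw [dist_iterate_bfsParent hk.le] at this
  omega

lemma iterate_bfsParent_ne {s i j : ℕ} {a b : V} (ha : G.dist v a = s) (hb : G.dist v b = s)
    (hab : (G.bfsParent v)^[s - 1] a ≠ (G.bfsParent v)^[s - 1] b) (hi : i < s) (hj : j ≤ s) :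
    (G.bfsParent v)^[i] a ≠ (G.bfsParent v)^[j] b := by
  intro h
  have hdi := dist_iterate_bfsParent (G := G) (v := v) (w := a) (k := i) (by omega)
  have hdj := dist_iterate_bfsParent (G := G) (v := v) (w := b) (k := j) (by omega)
  obtain rfl : i = j := by rw [h] at hdi; omega
  apply hab
  have := congrArg (G.bfsParent v)^[s - 1 - i] h
  simpa only [← Function.iterate_add_apply, Nat.sub_add_cancel (show i ≤ s - 1 by omega)] using this

theorem exists_isCycle_length_eq_of_iterate_bfsParent_ne {s : ℕ} (hs : 1 ≤ s) {a b : V}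
    {P : G.Walk a b} (hP : P.IsPath) (hPs : ∀ u ∈ P.support, G.dist v u = s)
    (hab : (G.bfsParent v)^[s - 1] a ≠ (G.bfsParent v)^[s - 1] b) :
    ∃ C : G.Walk a a, C.IsCycle ∧ C.length = P.length + 2 * s := by
  set f := G.bfsParent v
  have ha : G.dist v a = s := hPs a P.start_mem_support
  have hb : G.dist v b = s := hPs b P.end_mem_support
  obtain ⟨Qa, hQa, hQa_len, hQa_mem⟩ :=
    exists_isPath_iterate_bfsParent (G := G) (v := v) (w := a) (k := s - 1) (by omega)
  obtain ⟨Qb, hQb, hQb_len, hQb_mem⟩ :=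
    exists_isPath_iterate_bfsParent (G := G) (v := v) (w := b) (k := s) hb.ge
  have hbv : f^[s] b = v := hb ▸ iterate_dist_bfsParent (Reachable.of_dist_ne_zero (by omega))
  have hav : G.Adj v (f^[s - 1] a) := by
    rw [← dist_eq_one_iff_adj, dist_iterate_bfsParent (by omega), ha]
    omega
  have hPlen : P.length ≠ 0 := fun h => hab (by rw [Walk.eq_of_length_eq_zero h])
  set p := P.append (Qb.copy rfl hbv)
  set q := Walk.cons hav Qa.reverse
  have hp : p.IsPath := by
    refine hP.append (by simpa using hQb) fun x hx hx' => ?_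
    obtain ⟨j, hj, rfl⟩ := hQb_mem x (by simpa using hx')
    have := dist_iterate_bfsParent (G := G) (v := v) (k := j) (hb ▸ hj)
    obtain rfl : j = 0 := by rw [hPs _ hx, hb] at this; omega
    rfl
  have hq : q.IsPath := by
    refine hQa.reverse.cons fun hv => ?_
    obtain ⟨i, hi, hiv⟩ := hQa_mem v (by simpa using hv)
    have := dist_iterate_bfsParent (G := G) (v := v) (w := a) (k := i) (by omega)
    rw [hiv, dist_self] at this
    omega
  refine ⟨p.append q, hp.isCycle_append_of_forall_mem hq (fun x hx hx' => ?_) ?_, ?_⟩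
  · simp only [q, Walk.support_cons, Walk.support_reverse, List.mem_cons, List.mem_reverse] at hx'
    rcases hx' with rfl | hx'
    · exact .inr rfl
    obtain ⟨i, hi, rfl⟩ := hQa_mem _ hx'
    simp only [p, Walk.mem_support_append_iff, Walk.support_copy] at hx
    rcases hx with hx | hx
    · have := dist_iterate_bfsParent (G := G) (v := v) (w := a) (k := i) (by omega)
      obtain rfl : i = 0 := by rw [hPs _ hx, ha] at this; omega
      exact .inl rfl
    · obtain ⟨j, hj, hji⟩ := hQb_mem _ hx
      exact absurd hji.symm (iterate_bfsParent_ne ha hb hab (by omega) hj)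
  · simp only [p, Walk.length_append, Walk.length_copy]
    omega
  · simp only [p, q, Walk.length_append, Walk.length_copy, Walk.length_cons, Walk.length_reverse]
    omega

lemma Subgraph.neighborSet_eq_empty_of_subsingleton {J : G.Subgraph} (h : J.verts.Subsingleton)
    (w : V) : J.neighborSet w = ∅ :=
  Set.eq_empty_of_forall_notMem fun _ hu =>
    (J.adj_sub hu).ne (h (J.edge_vert hu) (J.edge_vert hu.symm))

lemma Subgraph.ncard_coe_neighborSet (J : G.Subgraph) (w : J.verts) :
    (J.coe.neighborSet w).ncard = (J.neighborSet w).ncard :=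
  Nat.card_congr (J.coeNeighborSetEquiv w)

theorem _root_.CFree.exists_forall_dist_eq_sub_one {r s : ℕ} (hH : CFree G (2 * r + 1))
    (hs : 1 ≤ s) (hsr : s ≤ r) {J : G.Subgraph} (hJ : J.Connected)
    (hJs : ∀ w ∈ J.verts, G.dist v w = s) (hdeg : ∀ w ∈ J.verts, 2 * r ≤ (J.neighborSet w).ncard) :
    ∃ c, ∀ w ∈ J.verts, G.Reachable c w ∧ G.dist c w = s - 1 := by
  set A := (G.bfsParent v)^[s - 1]
  have hpaths : ∀ (x y : J.verts) (p : J.coe.Walk x y), p.IsPath → p.length = 2 * (r - s) + 1 →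
      A x = A y := by
    intro x y p hp hlen
    by_contra hne
    obtain ⟨C, hC, hClen⟩ := exists_isCycle_length_eq_of_iterate_bfsParent_ne hs
      (hp.map Subgraph.hom_injective) (P := p.map J.hom) (fun u hu => by
        obtain ⟨z, -, rfl⟩ := List.mem_map.mp ((p.support_map J.hom) ▸ hu)
        exact hJs _ z.2) hne
    exact hH _ C hC (by rw [hClen, Walk.length_map, hlen]; omega)
  obtain ⟨w₀, hw₀⟩ := hJ.nonempty
  refine ⟨A w₀, fun w hw => ?_⟩
  have hA : A w = A w₀ := hJ.coe.apply_eq_of_forall_isPath_length_eq (odd_two_mul_add_one _)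
    (fun u => by rw [J.ncard_coe_neighborSet]; have := hdeg u u.2; omega) hpaths ⟨w, hw⟩ ⟨w₀, hw₀⟩
  rw [← hA]
  have := hJs w hw
  exact ⟨reachable_iterate_bfsParent (by omega), dist_iterate_bfsParent_left (by omega)⟩

end SimpleGraph

theorem subgraph_in_sphere_min_degree_lt_general {V : Type*}
    (r : ℕ) (hr : 1 ≤ r) (H : SimpleGraph V) (hH : CFree H (2 * r + 1))
    (v : V) (s : ℕ) (hs : s ≤ r)
    (J : H.Subgraph) (hJconn : J.Connected)
    (hJsub : ∀ w ∈ J.verts, H.Reachable v w ∧ H.dist v w = s) :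
    ∃ w ∈ J.verts, (J.neighborSet w).ncard < 2 * r := by
  by_contra! hdeg
  obtain ⟨w, hw⟩ := hJconn.nonempty
  induction s using Nat.strong_induction_on generalizing v with
  | _ s ih =>
  rcases Nat.eq_zero_or_pos s with rfl | hs₁
  · have hv : ∀ x ∈ J.verts, x = v := fun x hx =>
      ((hJsub x hx).1.dist_eq_zero_iff.mp (hJsub x hx).2).symm
    have := hdeg w hw
    rw [J.neighborSet_eq_empty_of_subsingleton fun x hx y hy => (hv x hx).trans (hv y hy).symm,
      Set.ncard_empty] at this
    omega
  · obtain ⟨c, hc⟩ := hH.exists_forall_dist_eq_sub_one hs₁ hs hJconn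
      (fun w hw => (hJsub w hw).2) hdeg
    exact ih (s - 1) (by omega) c (by omega) hc

/-- If `H` is `C_{2r+1}`-free and `J` is a connected nonempty subgraph whose
vertices all lie at distance exactly `s ≤ r` from `v`, then `J` has a vertex of
degree less than `2r`. -/
theorem subgraph_in_sphere_min_degree_lt {V : Type*} [Fintype V]
    (r : ℕ) (hr : 1 ≤ r) (H : SimpleGraph V) (hH : CFree H (2 * r + 1))
    (v : V) (s : ℕ) (hs : s ≤ r)
    (J : H.Subgraph) (hJconn : J.Connected) (hJne : J.verts.Nonempty)
    (hJsub : ∀ w ∈ J.verts, H.Reachable v w ∧ H.dist v w = s) :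
    ∃ w ∈ J.verts, (J.neighborSet w).ncard < 2 * r :=
  subgraph_in_sphere_min_degree_lt_general r hr H hH v s hs J hJconn hJsub
end
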